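/- arXiv:2202.06718 — 2 statements merged into one kernel-verified Lean document; each statement's English description precedes it below -/
import Mathlib

section
/- Let a, b > 0 and define Q_{a,b}^{[1]}(x) := (1 − a x/(a+1))^{b−1} for x ∈ (0,1). Then for all x ∈ (0,1): if b ∈ (0,1] ∪ [2,∞) then Q_{a,b}(x) ≥ Q_{a,b}^{[1]}(x), and if b ∈ [1,2] then Q_{a,b}(x) ≤ Q_{a,b}^{[1]}(x). -/
/-!
The weight `a y^(a-1) dy` is a probability measure on `[0,1]` with mean `a/(a+1)`, so
`c = 1 - a x/(a+1)` is the mean of `1 - x y` and `Q_{a,b}(x)` is the average of `t ↦ t^(b-1)`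
at `t = 1 - x y`. Integrating the tangent line of `t ↦ t^(b-1)` at `c` therefore gives exactly
`c^(b-1)`, and the claim is Jensen's inequality: `t^(b-1)` lies above its tangent lines when
`b - 1 ≤ 0` or `b - 1 ≥ 1`, and below them when `0 ≤ b - 1 ≤ 1`.
-/

open MeasureTheory
open intervalIntegral

/-- The auxiliary function `Q_{a,b}(x) = a ∫₀¹ y^(a-1) (1-xy)^(b-1) dy`. -/
noncomputable def Q (a b x : ℝ) : ℝ :=
  a * ∫ y in (0:ℝ)..1, y ^ (a - 1) * (1 - x * y) ^ (b - 1)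

lemma one_add_mul_self_le_rpow_one_add_of_nonpos {s : ℝ} (hs : -1 < s) {p : ℝ} (hp : p ≤ 0) :
    1 + p * s ≤ (1 + s) ^ p := by
  have hs' : 0 < 1 + s := by linarith
  have hlog : Real.log (1 + s) ≤ s := by linarith [Real.log_le_sub_one_of_pos hs']
  calc 1 + p * s ≤ Real.log (1 + s) * p + 1 := by nlinarith
    _ ≤ Real.exp (Real.log (1 + s) * p) := Real.add_one_le_exp _
    _ = (1 + s) ^ p := (Real.rpow_def_of_pos hs' p).symm

lemma rpow_eq_rpow_mul_rpow_one_add {s c : ℝ} (hs : 0 ≤ s) (hc : 0 < c) (p : ℝ) :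
    s ^ p = c ^ p * (1 + (s / c - 1)) ^ p := by
  rw [add_sub_cancel, Real.div_rpow hs hc.le, mul_div_cancel₀ _ (Real.rpow_pos_of_pos hc p).ne']

noncomputable def rpowTangent (p c s : ℝ) : ℝ :=
  c ^ p + p * c ^ (p - 1) * (s - c)

lemma rpowTangent_eq_rpow_mul_one_add_mul {c : ℝ} (hc : 0 < c) (p s : ℝ) :
    rpowTangent p c s = c ^ p * (1 + p * (s / c - 1)) := by
  rw [rpowTangent, Real.rpow_sub_one hc.ne']
  field_simp

lemma rpowTangent_le_rpow {s c p : ℝ} (hs : 0 < s) (hc : 0 < c) (hp : p ≤ 0 ∨ 1 ≤ p) :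
    rpowTangent p c s ≤ s ^ p := by
  have hsc : -1 < s / c - 1 := by linarith [div_pos hs hc]
  rw [rpowTangent_eq_rpow_mul_one_add_mul hc, rpow_eq_rpow_mul_rpow_one_add hs.le hc]
  refine mul_le_mul_of_nonneg_left ?_ (Real.rpow_nonneg hc.le p)
  rcases hp with hp | hp
  · exact one_add_mul_self_le_rpow_one_add_of_nonpos hsc hp
  · exact one_add_mul_self_le_rpow_one_add hsc.le hp

lemma rpow_le_rpowTangent {s c p : ℝ} (hs : 0 ≤ s) (hc : 0 < c) (hp₀ : 0 ≤ p)
    (hp₁ : p ≤ 1) :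
    s ^ p ≤ rpowTangent p c s := by
  have hsc : -1 ≤ s / c - 1 := by linarith [div_nonneg hs hc.le]
  rw [rpowTangent_eq_rpow_mul_one_add_mul hc, rpow_eq_rpow_mul_rpow_one_add hs hc]
  exact mul_le_mul_of_nonneg_left (rpow_one_add_le_one_add_mul_self hsc hp₀ hp₁)
    (Real.rpow_nonneg hc.le p)

lemma integral_rpow_mul_affine {a : ℝ} (ha : 0 < a) (A B : ℝ) :
    a * ∫ y in (0:ℝ)..1, y ^ (a - 1) * (A + B * y) = A + B * (a / (a + 1)) := by
  have hsplit : Set.EqOn (fun y : ℝ => y ^ (a - 1) * (A + B * y))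
      (fun y => A * y ^ (a - 1) + B * y ^ (a - 1 + 1)) (Set.uIcc 0 1) := by
    intro y hy
    dsimp only
    rw [Real.rpow_add_one' (by simpa using hy.1) (by linarith)]
    ring
  have ha₁ : (-1 : ℝ) < a - 1 := by linarith
  have ha₂ : (-1 : ℝ) < a - 1 + 1 := by linarith
  rw [integral_congr hsplit, integral_add ((intervalIntegrable_rpow' ha₁).const_mul A)
      ((intervalIntegrable_rpow' ha₂).const_mul B),
    intervalIntegral.integral_const_mul, intervalIntegral.integral_const_mul,
    integral_rpow (Or.inl ha₁), integral_rpow (Or.inl ha₂)]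
  simp only [sub_add_cancel, Real.one_rpow, sub_zero, Real.zero_rpow ha.ne',
    Real.zero_rpow (by linarith : a + 1 ≠ 0)]
  field_simp

lemma one_sub_mul_pos {x y : ℝ} (hx : x < 1) (hy : y ∈ Set.Icc (0:ℝ) 1) : 0 < 1 - x * y := by
  rcases le_or_gt x 0 with hx₀ | hx₀
  · nlinarith [hy.1]
  · nlinarith [hy.2]

lemma integral_rpow_mul_rpowTangent {a : ℝ} (ha : 0 < a) (p x : ℝ) :
    a * ∫ y in (0:ℝ)..1, y ^ (a - 1) * rpowTangent p (1 - a * x / (a + 1)) (1 - x * y) =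
      (1 - a * x / (a + 1)) ^ p := by
  set c := 1 - a * x / (a + 1)
  have haffine : ∀ y, rpowTangent p c (1 - x * y) =
      (c ^ p + p * c ^ (p - 1) * (1 - c)) + -(p * c ^ (p - 1) * x) * y := fun y => by
    rw [rpowTangent]; ring
  simp_rw [haffine]
  rw [integral_rpow_mul_affine ha]
  simp only [c]
  ring

lemma Q_sub_rpow_eq_integral {a b x : ℝ} (ha : 0 < a) (hx : x < 1) :
    Q a b x - (1 - a * x / (a + 1)) ^ (b - 1) =
      a * ∫ y in (0:ℝ)..1, y ^ (a - 1) *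
        ((1 - x * y) ^ (b - 1) - rpowTangent (b - 1) (1 - a * x / (a + 1)) (1 - x * y)) := by
  have hweight := intervalIntegrable_rpow' (a := 0) (b := 1) (by linarith : (-1:ℝ) < a - 1)
  have hQ_int : IntervalIntegrable (fun y => y ^ (a - 1) * (1 - x * y) ^ (b - 1)) volume 0 1 :=
    hweight.mul_continuousOn <| ContinuousOn.rpow_const (by fun_prop) fun y hy =>
      Or.inl (one_sub_mul_pos hx (by rwa [Set.uIcc_of_le zero_le_one] at hy)).ne'
  have htangent_int : IntervalIntegrable
      (fun y => y ^ (a - 1) * rpowTangent (b - 1) (1 - a * x / (a + 1)) (1 - x * y)) volume 0 1 :=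
    hweight.mul_continuousOn (by unfold rpowTangent; fun_prop)
  rw [Q, ← integral_rpow_mul_rpowTangent ha, ← mul_sub, ← integral_sub hQ_int htangent_int]
  simp only [mul_sub]

theorem beta_Q1_bounds_general (a b : ℝ) (ha : 0 < a)
    (x : ℝ) (hx : x ∈ Set.Ioo (0:ℝ) 1) :
    ((b ≤ 1 ∨ 2 ≤ b) → (1 - a * x / (a + 1)) ^ (b - 1) ≤ Q a b x) ∧
    ((1 ≤ b ∧ b ≤ 2) → Q a b x ≤ (1 - a * x / (a + 1)) ^ (b - 1)) := by
  have hc : 0 < 1 - a * x / (a + 1) := by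
    rw [sub_pos, div_lt_one (by linarith)]
    nlinarith [hx.2]
  constructor
  · intro hb
    rw [← sub_nonneg, Q_sub_rpow_eq_integral ha hx.2]
    refine mul_nonneg ha.le (integral_nonneg zero_le_one fun y hy =>
      mul_nonneg (Real.rpow_nonneg hy.1 _) <| sub_nonneg.2 <|
        rpowTangent_le_rpow (one_sub_mul_pos hx.2 hy) hc ?_)
    rcases hb with hb | hb
    exacts [Or.inl (by linarith), Or.inr (by linarith)]
  · rintro ⟨hb₁, hb₂⟩
    rw [← sub_nonpos, Q_sub_rpow_eq_integral ha hx.2, ← neg_nonneg, ← mul_neg,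
      ← intervalIntegral.integral_neg]
    refine mul_nonneg ha.le (integral_nonneg zero_le_one fun y hy => neg_nonneg.2 <|
      mul_nonpos_of_nonneg_of_nonpos (Real.rpow_nonneg hy.1 _)
        (sub_nonpos.2 <|
          rpow_le_rpowTangent (one_sub_mul_pos hx.2 hy).le hc (by linarith) (by linarith)))

theorem beta_Q1_bounds (a b : ℝ) (ha : 0 < a) (hb : 0 < b)
    (x : ℝ) (hx : x ∈ Set.Ioo (0:ℝ) 1) :
    ((b ≤ 1 ∨ 2 ≤ b) → (1 - a * x / (a + 1)) ^ (b - 1) ≤ Q a b x) ∧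
    ((1 ≤ b ∧ b ≤ 2) → Q a b x ≤ (1 - a * x / (a + 1)) ^ (b - 1)) :=
  beta_Q1_bounds_general a b ha x hx
end

section
/- Let a, b > 0 and define Q_{a,b}^{[5]}(x) := (a(1−x)^{b−1} + 1)/(a+1) − a(b−1)(b−2)x² (a + 5 + 2(a+2)(1−x)^{b−3}) / (6(a+1)(a+2)(a+3)) for x ∈ (0,1). Then for all x ∈ (0,1): if b ∈ (0,1] ∪ [2,3] ∪ [4,∞) then Q_{a,b}(x) ≥ Q_{a,b}^{[5]}(x), and if b ∈ [1,2] ∪ [3,4] then Q_{a,b}(x) ≤ Q_{a,b}^{[5]}(x). -/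
open MeasureTheory Set

/-!
Write `R(y) = (1 - x y)^(b-1) - P(y)`, where `P` is the cubic in `y` that agrees with
`(1 - x y)^(b-1)` at `y = 0, 1` and whose second derivative is `x²(b-1)(b-2)` times the chord of
`t ↦ t^(b-3)` over `[1 - x, 1]`. The moments `a ∫₀¹ y^(a-1) y^k dy = a/(a+k)` turn `P` into
`Q⁽⁵⁾`, so `Q - Q⁽⁵⁾ = a ∫₀¹ y^(a-1) R(y) dy`. Now `R'' = x²(b-1)(b-2)((1 - x y)^(b-3) - chord)`,
and the bracket is `≤ 0` when `t^(b-3)` is convex (`b ≤ 3` or `b ≥ 4`) and `≥ 0` when it is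
concave (`3 ≤ b ≤ 4`). So in each range of `b` the function `R` is convex or concave on `[0, 1]`;
as it vanishes at both endpoints, it has constant sign, and so does the integral.
-/

noncomputable def Q5 (a b x : ℝ) : ℝ :=
  (a * (1 - x) ^ (b - 1) + 1) / (a + 1)
    - a * (b - 1) * (b - 2) * x ^ 2 * (a + 5 + 2 * (a + 2) * (1 - x) ^ (b - 3))
      / (6 * (a + 1) * (a + 2) * (a + 3))

lemma convexOn_rpow_of_nonpos {p : ℝ} (hp : p ≤ 0) :
    ConvexOn ℝ (Ioi 0) fun t : ℝ => t ^ p := by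
  refine convexOn_of_hasDerivWithinAt2_nonneg (f' := fun t => p * t ^ (p - 1))
    (f'' := fun t => p * ((p - 1) * t ^ (p - 1 - 1))) (convex_Ioi 0)
    (fun t ht => (Real.continuousAt_rpow_const t p (Or.inl ht.ne')).continuousWithinAt)
    ?_ ?_ ?_ <;> rw [interior_Ioi] <;> intro t (ht : 0 < t)
  · exact (Real.hasDerivAt_rpow_const (Or.inl ht.ne')).hasDerivWithinAt
  · exact ((Real.hasDerivAt_rpow_const (Or.inl ht.ne')).const_mul p).hasDerivWithinAt
  · have := Real.rpow_nonneg ht.le (p - 1 - 1)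
    have : 0 ≤ p * (p - 1) := mul_nonneg_of_nonpos_of_nonpos hp (by linarith)
    rw [← mul_assoc]; positivity

-- The gap between `t ↦ t^p` and its chord over `[1 - x, 1]`, at the point `t = 1 - x y`.
noncomputable def chordGap (p x y : ℝ) : ℝ :=
  (1 - x * y) ^ p - ((1 - y) + y * (1 - x) ^ p)

lemma chordGap_nonpos {p x y : ℝ} (hp : p ≤ 0 ∨ 1 ≤ p) (hx : x < 1) (hy : y ∈ Icc (0:ℝ) 1) :
    chordGap p x y ≤ 0 := by
  have hconv : ConvexOn ℝ (Ioi 0) fun t : ℝ => t ^ p := by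
    rcases hp with hp | hp
    · exact convexOn_rpow_of_nonpos hp
    · exact (convexOn_rpow hp).subset Ioi_subset_Ici_self (convex_Ioi 0)
  have := hconv.2 (mem_Ioi.2 one_pos) (mem_Ioi.2 (sub_pos.2 hx))
    (sub_nonneg.2 hy.2) hy.1 (by ring)
  simp only [smul_eq_mul, mul_one, Real.one_rpow] at this
  rw [chordGap, sub_nonpos, show 1 - x * y = (1 - y) + y * (1 - x) by ring]
  exact this

lemma chordGap_nonneg {p x y : ℝ} (hp : p ∈ Icc (0:ℝ) 1) (hx : x ≤ 1) (hy : y ∈ Icc (0:ℝ) 1) :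
    0 ≤ chordGap p x y := by
  have := (Real.concaveOn_rpow hp.1 hp.2).2 (mem_Ici.2 zero_le_one) (mem_Ici.2 (sub_nonneg.2 hx))
    (sub_nonneg.2 hy.2) hy.1 (by ring)
  simp only [smul_eq_mul, mul_one, Real.one_rpow] at this
  rw [chordGap, sub_nonneg, show 1 - x * y = (1 - y) + y * (1 - x) by ring]
  exact this

lemma mul_lt_one_of_mem_Icc {x y : ℝ} (hx : x < 1) (hy : y ∈ Icc (0:ℝ) 1) : x * y < 1 := by
  rcases hy.1.eq_or_lt with rfl | hy0
  · simp
  · nlinarith [hy.2]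

lemma hasDerivAt_one_sub_mul_rpow {p x y : ℝ} (h : x * y < 1) :
    HasDerivAt (fun y => (1 - x * y) ^ p) (-x * p * (1 - x * y) ^ (p - 1)) y := by
  have := (((hasDerivAt_id' y).const_mul x).const_sub 1).rpow_const (p := p)
    (Or.inl (sub_pos.2 h).ne')
  convert this using 1; ring

-- `y(1-y)(2-y)` and `y(1-y)(1+y)` vanish at 0, 1 and have second derivatives `-6(1-y)`, `-6y`.
noncomputable def q5Remainder (b x y : ℝ) : ℝ :=
  chordGap (b - 1) x y
    + x ^ 2 * (b - 1) * (b - 2) / 6 * (y * (1 - y) * ((2 - y) + (1 + y) * (1 - x) ^ (b - 3)))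

lemma q5Remainder_hasDerivAt2 (b x : ℝ) : ∃ f' : ℝ → ℝ, ∀ y, x * y < 1 →
    HasDerivAt (q5Remainder b x) (f' y) y ∧
      HasDerivAt f' (x ^ 2 * ((b - 1) * (b - 2) * chordGap (b - 3) x y)) y := by
  obtain ⟨c, hc⟩ : ∃ c, c = x ^ 2 * (b - 1) * (b - 2) / 6 := ⟨_, rfl⟩
  obtain ⟨k, hk⟩ : ∃ k, k = (1 - x) ^ (b - 3) := ⟨_, rfl⟩
  obtain ⟨m, hm⟩ : ∃ m, m = (1 - x) ^ (b - 1) := ⟨_, rfl⟩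
  refine ⟨fun y => -x * (b - 1) * (1 - x * y) ^ (b - 1 - 1)
    + (1 - m + c * (2 - 6 * y + 3 * y ^ 2 + k * (1 - 3 * y ^ 2))), fun y hy => ⟨?_, ?_⟩⟩
  · have e : q5Remainder b x = fun y => (1 - x * y) ^ (b - 1)
        + (-(1 - y + y * m) + c * (y * (1 - y) * ((2 - y) + (1 + y) * k))) := by
      funext y; simp only [q5Remainder, chordGap, hc, hk, hm]; ring
    have i := hasDerivAt_id' y
    rw [e]
    refine ((hasDerivAt_one_sub_mul_rpow hy).add (((i.const_sub 1).add (i.mul_const m)).neg.add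
      (((i.mul (i.const_sub 1)).mul ((i.const_sub 2).add ((i.const_add 1).mul_const k))).const_mul
        c))).congr_deriv ?_
    simp only [Pi.add_apply, Pi.mul_apply]
    ring
  · have i := hasDerivAt_id' y
    refine (((hasDerivAt_one_sub_mul_rpow hy).const_mul (-x * (b - 1))).add
      ((((((i.const_mul 6).const_sub 2).add ((i.pow 2).const_mul 3)).add
        ((((i.pow 2).const_mul 3).const_sub 1).const_mul k)).const_mul c).const_add (1 - m)))
        |>.congr_deriv ?_
    simp only [chordGap, hc, hk]
    rw [show b - 1 - 1 - 1 = b - 3 by ring]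
    ring

lemma integral_rpow_mul_pow {a : ℝ} (ha : 0 < a) (k : ℕ) :
    ∫ y in (0:ℝ)..1, y ^ (a - 1) * y ^ k = 1 / (a + k) := by
  rw [intervalIntegral.integral_congr_ae (g := fun y => y ^ (a - 1 + k)) (ae_of_all _ fun y hy => by
      rw [uIoc_of_le zero_le_one] at hy
      rw [← Real.rpow_natCast, ← Real.rpow_add hy.1]),
    integral_rpow (Or.inl (by linarith [k.cast_nonneg (α := ℝ)]))]
  rw [show a - 1 + k + 1 = a + k by ring, Real.zero_rpow (by positivity), Real.one_rpow, sub_zero]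

lemma integral_rpow_mul_cubic {a : ℝ} (ha : 0 < a) (c₀ c₁ c₂ c₃ : ℝ) :
    ∫ y in (0:ℝ)..1, y ^ (a - 1) * (c₀ + c₁ * y + c₂ * y ^ 2 + c₃ * y ^ 3)
      = c₀ / a + c₁ / (a + 1) + c₂ / (a + 2) + c₃ / (a + 3) := by
  have hi : ∀ k : ℕ, IntervalIntegrable (fun y : ℝ => y ^ (a - 1) * y ^ k) volume 0 1 := fun k =>
    (intervalIntegral.intervalIntegrable_rpow' (by linarith)).mul_continuousOn
      (continuous_pow k).continuousOn
  have e : (fun y : ℝ => y ^ (a - 1) * (c₀ + c₁ * y + c₂ * y ^ 2 + c₃ * y ^ 3))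
      = fun y => c₀ * (y ^ (a - 1) * y ^ 0) + c₁ * (y ^ (a - 1) * y ^ 1)
        + c₂ * (y ^ (a - 1) * y ^ 2) + c₃ * (y ^ (a - 1) * y ^ 3) := by
    funext y; ring
  rw [e, intervalIntegral.integral_add (((hi 0).const_mul _).add ((hi 1).const_mul _) |>.add
      ((hi 2).const_mul _)) ((hi 3).const_mul _),
    intervalIntegral.integral_add (((hi 0).const_mul _).add ((hi 1).const_mul _))
      ((hi 2).const_mul _),
    intervalIntegral.integral_add ((hi 0).const_mul _) ((hi 1).const_mul _)]
  simp only [intervalIntegral.integral_const_mul, integral_rpow_mul_pow ha]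
  push_cast
  ring

lemma continuousOn_q5Remainder {b x : ℝ} (hx : x < 1) :
    ContinuousOn (q5Remainder b x) (Icc 0 1) := fun y hy =>
  ((q5Remainder_hasDerivAt2 b x).choose_spec y (mul_lt_one_of_mem_Icc hx hy)).1
    |>.continuousAt.continuousWithinAt

@[simp] lemma q5Remainder_zero (b x : ℝ) : q5Remainder b x 0 = 0 := by
  simp [q5Remainder, chordGap]

@[simp] lemma q5Remainder_one (b x : ℝ) : q5Remainder b x 1 = 0 := by
  simp [q5Remainder, chordGap]

lemma q5Remainder_nonneg {b x y : ℝ} (hx : x < 1)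
    (h : ∀ y ∈ Ioo (0:ℝ) 1, (b - 1) * (b - 2) * chordGap (b - 3) x y ≤ 0)
    (hy : y ∈ Icc (0:ℝ) 1) : 0 ≤ q5Remainder b x y := by
  obtain ⟨f', hf'⟩ := q5Remainder_hasDerivAt2 b x
  have hconc : ConcaveOn ℝ (Icc 0 1) (q5Remainder b x) := by
    refine concaveOn_of_hasDerivWithinAt2_nonpos (f' := f')
      (f'' := fun y => x ^ 2 * ((b - 1) * (b - 2) * chordGap (b - 3) x y)) (convex_Icc 0 1)
      (continuousOn_q5Remainder hx)
      ?_ ?_ ?_ <;> rw [interior_Icc] <;> intro y hy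
    · exact (hf' y (mul_lt_one_of_mem_Icc hx (Ioo_subset_Icc_self hy))).1.hasDerivWithinAt
    · exact (hf' y (mul_lt_one_of_mem_Icc hx (Ioo_subset_Icc_self hy))).2.hasDerivWithinAt
    · exact mul_nonpos_of_nonneg_of_nonpos (sq_nonneg x) (h y hy)
  simpa using hconc.ge_on_segment (left_mem_Icc.2 zero_le_one) (right_mem_Icc.2 zero_le_one)
    (by rwa [segment_eq_Icc zero_le_one])

lemma q5Remainder_nonpos {b x y : ℝ} (hx : x < 1)
    (h : ∀ y ∈ Ioo (0:ℝ) 1, 0 ≤ (b - 1) * (b - 2) * chordGap (b - 3) x y)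
    (hy : y ∈ Icc (0:ℝ) 1) : q5Remainder b x y ≤ 0 := by
  obtain ⟨f', hf'⟩ := q5Remainder_hasDerivAt2 b x
  have hconv : ConvexOn ℝ (Icc 0 1) (q5Remainder b x) := by
    refine convexOn_of_hasDerivWithinAt2_nonneg (f' := f')
      (f'' := fun y => x ^ 2 * ((b - 1) * (b - 2) * chordGap (b - 3) x y)) (convex_Icc 0 1)
      (continuousOn_q5Remainder hx)
      ?_ ?_ ?_ <;> rw [interior_Icc] <;> intro y hy
    · exact (hf' y (mul_lt_one_of_mem_Icc hx (Ioo_subset_Icc_self hy))).1.hasDerivWithinAt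
    · exact (hf' y (mul_lt_one_of_mem_Icc hx (Ioo_subset_Icc_self hy))).2.hasDerivWithinAt
    · exact mul_nonneg (sq_nonneg x) (h y hy)
  simpa using hconv.le_on_segment (left_mem_Icc.2 zero_le_one) (right_mem_Icc.2 zero_le_one)
    (by rwa [segment_eq_Icc zero_le_one])

lemma mul_chordGap_nonpos {b x y : ℝ} (hb : b ≤ 1 ∨ (2 ≤ b ∧ b ≤ 3) ∨ 4 ≤ b) (hx : x < 1)
    (hy : y ∈ Icc (0:ℝ) 1) : (b - 1) * (b - 2) * chordGap (b - 3) x y ≤ 0 := by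
  refine mul_nonpos_of_nonneg_of_nonpos ?_ (chordGap_nonpos ?_ hx hy)
  · rcases hb with hb | hb | hb
    · exact mul_nonneg_of_nonpos_of_nonpos (by linarith) (by linarith)
    · exact mul_nonneg (by linarith) (by linarith)
    · exact mul_nonneg (by linarith) (by linarith)
  · rcases hb with hb | hb | hb
    · exact Or.inl (by linarith)
    · exact Or.inl (by linarith)
    · exact Or.inr (by linarith)

lemma mul_chordGap_nonneg {b x y : ℝ} (hb : (1 ≤ b ∧ b ≤ 2) ∨ (3 ≤ b ∧ b ≤ 4)) (hx : x < 1)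
    (hy : y ∈ Icc (0:ℝ) 1) : 0 ≤ (b - 1) * (b - 2) * chordGap (b - 3) x y := by
  rcases hb with hb | hb
  · exact mul_nonneg_of_nonpos_of_nonpos
      (mul_nonpos_of_nonneg_of_nonpos (by linarith) (by linarith))
      (chordGap_nonpos (Or.inl (by linarith)) hx hy)
  · exact mul_nonneg (mul_nonneg (by linarith) (by linarith))
      (chordGap_nonneg ⟨by linarith, by linarith⟩ hx.le hy)

lemma Q_sub_Q5 {a b x : ℝ} (ha : 0 < a) (hx : x < 1) :
    Q a b x - Q5 a b x = a * ∫ y in (0:ℝ)..1, y ^ (a - 1) * q5Remainder b x y := by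
  set C := x ^ 2 * (b - 1) * (b - 2) / 6
  set k := (1 - x) ^ (b - 3)
  set m := (1 - x) ^ (b - 1)
  have hrem : ∀ y, y ^ (a - 1) * q5Remainder b x y = y ^ (a - 1) * (1 - x * y) ^ (b - 1)
      - y ^ (a - 1) * (1 + (m - 1 - C * (2 + k)) * y + 3 * C * y ^ 2 + -(C * (1 - k)) * y ^ 3) := by
    intro y; simp only [q5Remainder, chordGap]; ring
  have hpow : IntervalIntegrable (fun y : ℝ => y ^ (a - 1)) volume 0 1 :=
    intervalIntegral.intervalIntegrable_rpow' (by linarith)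
  have hg : ContinuousOn (fun y : ℝ => (1 - x * y) ^ (b - 1)) (uIcc 0 1) := fun y hy =>
    ((continuousAt_const.sub (continuousAt_const.mul continuousAt_id)).rpow_const
      (Or.inl (sub_pos.2 (mul_lt_one_of_mem_Icc hx (by rwa [uIcc_of_le zero_le_one] at hy))).ne'))
      |>.continuousWithinAt
  simp only [hrem]
  rw [intervalIntegral.integral_sub (hpow.mul_continuousOn hg)
    (hpow.mul_continuousOn (by fun_prop)), integral_rpow_mul_cubic ha, Q, Q5]
  field_simp
  ring

theorem beta_Q5_bounds_general (a b : ℝ) (ha : 0 < a)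
    (x : ℝ) (hx : x ∈ Set.Ioo (0:ℝ) 1) :
    ((b ≤ 1 ∨ (2 ≤ b ∧ b ≤ 3) ∨ 4 ≤ b) →
      (a * (1 - x) ^ (b - 1) + 1) / (a + 1)
        - a * (b - 1) * (b - 2) * x ^ 2 * (a + 5 + 2 * (a + 2) * (1 - x) ^ (b - 3))
          / (6 * (a + 1) * (a + 2) * (a + 3)) ≤ Q a b x) ∧
    (((1 ≤ b ∧ b ≤ 2) ∨ (3 ≤ b ∧ b ≤ 4)) →
      Q a b x ≤ (a * (1 - x) ^ (b - 1) + 1) / (a + 1)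
        - a * (b - 1) * (b - 2) * x ^ 2 * (a + 5 + 2 * (a + 2) * (1 - x) ^ (b - 3))
          / (6 * (a + 1) * (a + 2) * (a + 3))) := by
  obtain ⟨-, hx1⟩ := hx
  have hdiff := Q_sub_Q5 (b := b) ha hx1
  refine ⟨fun hb => ?_, fun hb => ?_⟩
  · have hR : ∀ y ∈ Icc (0:ℝ) 1, 0 ≤ q5Remainder b x y := fun y =>
      q5Remainder_nonneg hx1 fun z hz => mul_chordGap_nonpos hb hx1 (Ioo_subset_Icc_self hz)
    have hint : 0 ≤ ∫ y in (0:ℝ)..1, y ^ (a - 1) * q5Remainder b x y :=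
      intervalIntegral.integral_nonneg zero_le_one fun y hy =>
        mul_nonneg (Real.rpow_nonneg hy.1 _) (hR y hy)
    change Q5 a b x ≤ Q a b x
    linarith [mul_nonneg ha.le hint]
  · have hR : ∀ y ∈ Icc (0:ℝ) 1, q5Remainder b x y ≤ 0 := fun y =>
      q5Remainder_nonpos hx1 fun z hz => mul_chordGap_nonneg hb hx1 (Ioo_subset_Icc_self hz)
    have hint : 0 ≤ ∫ y in (0:ℝ)..1, -(y ^ (a - 1) * q5Remainder b x y) :=
      intervalIntegral.integral_nonneg zero_le_one fun y hy =>
        neg_nonneg.2 (mul_nonpos_of_nonneg_of_nonpos (Real.rpow_nonneg hy.1 _) (hR y hy))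
    rw [intervalIntegral.integral_neg] at hint
    change Q a b x ≤ Q5 a b x
    linarith [mul_nonneg ha.le hint]

theorem beta_Q5_bounds (a b : ℝ) (ha : 0 < a) (hb : 0 < b)
    (x : ℝ) (hx : x ∈ Set.Ioo (0:ℝ) 1) :
    ((b ≤ 1 ∨ (2 ≤ b ∧ b ≤ 3) ∨ 4 ≤ b) →
      (a * (1 - x) ^ (b - 1) + 1) / (a + 1)
        - a * (b - 1) * (b - 2) * x ^ 2 * (a + 5 + 2 * (a + 2) * (1 - x) ^ (b - 3))
          / (6 * (a + 1) * (a + 2) * (a + 3)) ≤ Q a b x) ∧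
    (((1 ≤ b ∧ b ≤ 2) ∨ (3 ≤ b ∧ b ≤ 4)) →
      Q a b x ≤ (a * (1 - x) ^ (b - 1) + 1) / (a + 1)
        - a * (b - 1) * (b - 2) * x ^ 2 * (a + 5 + 2 * (a + 2) * (1 - x) ^ (b - 3))
          / (6 * (a + 1) * (a + 2) * (a + 3))) :=
  beta_Q5_bounds_general a b ha x hx
end
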